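/- Let Δ₁ and Δ₂ be runtime type environments whose sets of session names are disjoint, such that each of Δ₁ and Δ₂ is safe. Then the combined environment Δ₁, Δ₂ is safe. -/

import Mathlib

/- Runtime type environments of the Maty multiparty session type system.
Environments map session endpoints `s[p]` to local session types and session
names `s` to queue types; the environment reduction relation is the
asynchronous LTS (send, receive, end, recursion unfolding), taken modulo queue
congruence.  Safety is the largest property satisfying the head-message
condition, closure under unfolding, and closure under reduction.
Deadlock-freedom requires every maximal reduction sequence to end in a single
empty queue. -/

abbrev Role := ℕ
abbrev Label := ℕ
abbrev Ty := ℕ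

/-- Local session types: selection ⊕, branching &, recursion μ (de Bruijn),
variables, and end.  Branches are given by a decidable label set `dom`, a
payload-type assignment `pay` and continuations `cont`. -/
inductive SessionTy : Type where
  | select (q : Role) (dom : Label → Bool) (pay : Label → Ty) (cont : Label → SessionTy)
  | branch (q : Role) (dom : Label → Bool) (pay : Label → Ty) (cont : Label → SessionTy)
  | mu (S : SessionTy)
  | var (n : ℕ)
  | endS

/-- Substitution `S[T / var k]` (used only for unfolding recursive types). -/
def SessionTy.subst : SessionTy → ℕ → SessionTy → SessionTy
  | .select q d p c, k, T => .select q d p (fun l => (c l).subst k T)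
  | .branch q d p c, k, T => .branch q d p (fun l => (c l).subst k T)
  | .mu S, k, T => .mu (S.subst (k+1) T)
  | .var n, k, T => if n = k then T else .var n
  | .endS, _, _ => .endS

/-- Unfolding of a recursive type: `unfold (μX.S) = S[μX.S/X]`. -/
def SessionTy.unfold : SessionTy → SessionTy
  | .mu S => S.subst 0 (.mu S)
  | S => S

structure QEntry where
  sender : Role
  receiver : Role
  label : Label
  payload : Ty
deriving DecidableEq

abbrev Queue := List QEntry

/-- Swap of adjacent queue entries with distinct (sender, receiver) pairs. -/
inductive QSwap : Queue → Queue → Prop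
  | swap (Q₁ Q₂ : Queue) (e₁ e₂ : QEntry)
      (h : e₁.sender ≠ e₂.sender ∨ e₁.receiver ≠ e₂.receiver) :
      QSwap (Q₁ ++ e₁ :: e₂ :: Q₂) (Q₁ ++ e₂ :: e₁ :: Q₂)

/-- Queue congruence. -/
def QCong : Queue → Queue → Prop := Relation.EqvGen QSwap

abbrev SName := ℕ

/-- Environment entries: session endpoints `s[p] : S` and queues `s : Q`. -/
inductive EnvEntry : Type where
  | ep (s : SName) (p : Role) (S : SessionTy)
  | qu (s : SName) (Q : Queue)

/-- Runtime type environments (unordered collections of entries). -/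
abbrev Env := Multiset EnvEntry

/-- Congruence on entries: queue types may be permuted by queue congruence. -/
inductive EntryCong : EnvEntry → EnvEntry → Prop
  | ep {s p S} : EntryCong (.ep s p S) (.ep s p S)
  | qu {s Q Q'} : QCong Q Q' → EntryCong (.qu s Q) (.qu s Q')

/-- Congruence on environments: pointwise congruence of entries. -/
def EnvCong : Env → Env → Prop := Multiset.Rel EntryCong

/-- One labelled step of the LTS on runtime type environments. -/
inductive EStep : Env → Env → Prop
  | send (Δ : Env) (s : SName) (p q : Role) (ℓ : Label)
      (d : Label → Bool) (pay : Label → Ty) (cont : Label → SessionTy) (Q : Queue)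
      (h : d ℓ = true) :
      EStep (EnvEntry.ep s p (.select q d pay cont) ::ₘ EnvEntry.qu s Q ::ₘ Δ)
            (EnvEntry.ep s p (cont ℓ) ::ₘ EnvEntry.qu s (Q ++ [⟨p, q, ℓ, pay ℓ⟩]) ::ₘ Δ)
  | recv (Δ : Env) (s : SName) (p q : Role) (ℓ : Label)
      (d : Label → Bool) (pay : Label → Ty) (cont : Label → SessionTy) (Q : Queue)
      (h : d ℓ = true) :
      EStep (EnvEntry.ep s p (.branch q d pay cont) ::ₘ
               EnvEntry.qu s (⟨q, p, ℓ, pay ℓ⟩ :: Q) ::ₘ Δ)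
            (EnvEntry.ep s p (cont ℓ) ::ₘ EnvEntry.qu s Q ::ₘ Δ)
  | done (Δ : Env) (s : SName) (p : Role) :
      EStep (EnvEntry.ep s p .endS ::ₘ Δ) Δ
  | unfold (Δ Δ' : Env) (s : SName) (p : Role) (S : SessionTy)
      (h : EStep (EnvEntry.ep s p (SessionTy.mu S).unfold ::ₘ Δ) Δ') :
      EStep (EnvEntry.ep s p (.mu S) ::ₘ Δ) Δ'

/-- Environment reduction `Δ ⟹ Δ'`: a labelled step taken modulo congruence. -/
def ERed (Δ Δ' : Env) : Prop :=
  ∃ Δ₁ Δ₂, EnvCong Δ Δ₁ ∧ EStep Δ₁ Δ₂ ∧ EnvCong Δ₂ Δ'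

/-- Head-message condition: any receivable head message at a branching endpoint
matches a declared branch with equal payload type. -/
def HeadSafe (Δ : Env) : Prop :=
  ∀ (s : SName) (p q : Role) (d : Label → Bool) (pay : Label → Ty)
      (cont : Label → SessionTy) (Q : Queue),
    EnvEntry.ep s p (.branch q d pay cont) ∈ Δ →
    EnvEntry.qu s Q ∈ Δ →
    ∀ (ℓ : Label) (B : Ty) (Q' : Queue), QCong Q (⟨q, p, ℓ, B⟩ :: Q') →
      d ℓ = true ∧ B = pay ℓ

/-- A safety property: satisfies the head-message condition, is closed under
unfolding of recursive endpoint types, and is preserved by reduction. -/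
def IsSafetyProp (φ : Env → Prop) : Prop :=
  ∀ Δ, φ Δ →
    HeadSafe Δ ∧
    (∀ (Δ' : Env) (s : SName) (p : Role) (S : SessionTy),
        Δ = EnvEntry.ep s p (.mu S) ::ₘ Δ' →
        φ (EnvEntry.ep s p (SessionTy.mu S).unfold ::ₘ Δ')) ∧
    (∀ Δ', ERed Δ Δ' → φ Δ')

/-- Safety: the largest safety property. -/
def EnvSafe (Δ : Env) : Prop := ∃ φ, IsSafetyProp φ ∧ φ Δ

/-- Deadlock-freedom: every maximal reduction sequence ends in a single empty
queue `s : ε`. -/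
def DeadlockFree (Δ : Env) : Prop :=
  ∀ Δ', Relation.ReflTransGen ERed Δ Δ' → (∀ Δ'', ¬ ERed Δ' Δ'') →
    ∃ s, Δ' = {EnvEntry.qu s []}

/-- The session name of an entry. -/
def EnvEntry.sname : EnvEntry → SName
  | .ep s _ _ => s
  | .qu s _ => s

/-- The set of session names occurring in an environment. -/
def snames (Δ : Env) : Set SName := { s | ∃ e ∈ Δ, EnvEntry.sname e = s }

/-- Compliance: safety together with deadlock-freedom. -/
def Compliant (Δ : Env) : Prop := EnvSafe Δ ∧ DeadlockFree Δ

/-!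
Every reduction rule touches a single session, so a step of `Δ₁ + Δ₂` is a step of one
component, except that the recursion rule may first unfold endpoints of the other component
before stepping.  Hence the environments that split into two safe environments with disjoint
session names form a safety property: the head-message condition only relates an endpoint and
a queue of the same session, which lie in the same component, and unfoldings and reductions
keep each component safe and the session names disjoint.
-/

theorem Multiset.cons_eq_add {α : Type*} {a : α} {s t u : Multiset α} (h : a ::ₘ s = t + u) :
    (∃ r, t = a ::ₘ r ∧ s = r + u) ∨ (∃ r, u = a ::ₘ r ∧ s = t + r) := by
  rcases Multiset.mem_add.1 (h ▸ Multiset.mem_cons_self a s) with ht | hu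
  · obtain ⟨r, rfl⟩ := Multiset.exists_cons_of_mem ht
    exact .inl ⟨r, rfl, (Multiset.cons_inj_right a).1 (by rw [h, Multiset.cons_add])⟩
  · obtain ⟨r, rfl⟩ := Multiset.exists_cons_of_mem hu
    exact .inr ⟨r, rfl, (Multiset.cons_inj_right a).1 (by rw [h, Multiset.add_cons])⟩

theorem EntryCong.refl (e : EnvEntry) : EntryCong e e := by
  cases e with
  | ep => exact .ep
  | qu _ Q => exact .qu (.refl Q)

theorem EntryCong.symm {e e' : EnvEntry} (h : EntryCong e e') : EntryCong e' e := by
  cases h with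
  | ep => exact .ep
  | qu h => exact .qu (.symm _ _ h)

theorem EntryCong.trans {e e' e'' : EnvEntry} (h : EntryCong e e') (h' : EntryCong e' e'') :
    EntryCong e e'' := by
  cases h with
  | ep => exact h'
  | qu h => cases h' with
    | qu h' => exact .qu (.trans _ _ _ h h')

instance : IsTrans EnvEntry EntryCong := ⟨fun _ _ _ => EntryCong.trans⟩

theorem EnvCong.refl (Δ : Env) : EnvCong Δ Δ :=
  Multiset.rel_refl_of_refl_on fun e _ => EntryCong.refl e

theorem EnvCong.symm {Δ Δ' : Env} (h : EnvCong Δ Δ') : EnvCong Δ' Δ :=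
  Multiset.rel_flip.1 (h.mono fun _ _ _ _ => EntryCong.symm)

theorem EnvCong.trans {Δ Δ' Δ'' : Env} (h : EnvCong Δ Δ') (h' : EnvCong Δ' Δ'') :
    EnvCong Δ Δ'' :=
  Multiset.Rel.trans EntryCong h h'

theorem mem_snames_of_mem {e : EnvEntry} {Δ : Env} (he : e ∈ Δ) : e.sname ∈ snames Δ :=
  ⟨e, he, rfl⟩

theorem sname_ne_of_disjoint {A B : Env} (hd : Disjoint (snames A) (snames B))
    {e e' : EnvEntry} (he : e ∈ A) (he' : e' ∈ B) : e.sname ≠ e'.sname := fun h =>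
  Set.disjoint_left.1 hd (mem_snames_of_mem he) (h ▸ mem_snames_of_mem he')

theorem snames_cons (e : EnvEntry) (Δ : Env) :
    snames (e ::ₘ Δ) = insert e.sname (snames Δ) := by
  ext s
  simp [snames, or_and_right, exists_or, eq_comm]

theorem snames_eq_of_envCong {Δ Δ' : Env} (h : EnvCong Δ Δ') : snames Δ = snames Δ' := by
  have hmap : Δ.map EnvEntry.sname = Δ'.map EnvEntry.sname := by
    refine Multiset.rel_eq.1 (Multiset.rel_map.2 (h.mono fun _ _ _ _ hc => ?_))
    cases hc <;> rfl
  ext s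
  have hs := Iff.of_eq (congrArg (s ∈ ·) hmap)
  simp only [Multiset.mem_map] at hs
  exact hs

theorem EStep.snames_subset {Δ Δ' : Env} (h : EStep Δ Δ') : snames Δ' ⊆ snames Δ := by
  induction h with
  | done => simp only [snames_cons, Set.subset_insert]
  | unfold _ _ _ _ _ _ ih => simpa only [snames_cons, EnvEntry.sname] using ih
  | _ => simp only [snames_cons, EnvEntry.sname, subset_refl]

theorem cons_cons_eq_add {e₁ e₂ : EnvEntry} {Δ A B : Env} (h : e₁ ::ₘ e₂ ::ₘ Δ = A + B)
    (hname : e₁.sname = e₂.sname) (hd : Disjoint (snames A) (snames B)) :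
    (∃ C, A = e₁ ::ₘ e₂ ::ₘ C ∧ Δ = C + B) ∨ (∃ C, B = e₁ ::ₘ e₂ ::ₘ C ∧ Δ = A + C) := by
  rcases Multiset.cons_eq_add h with ⟨C, rfl, hC⟩ | ⟨C, rfl, hC⟩
  · rcases Multiset.cons_eq_add hC with ⟨D, rfl, rfl⟩ | ⟨D, rfl, -⟩
    · exact .inl ⟨D, rfl, rfl⟩
    · exact absurd hname (sname_ne_of_disjoint hd (Multiset.mem_cons_self _ _)
        (Multiset.mem_cons_self _ _))
  · rcases Multiset.cons_eq_add hC with ⟨D, rfl, -⟩ | ⟨D, rfl, rfl⟩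
    · exact absurd hname.symm (sname_ne_of_disjoint hd (Multiset.mem_cons_self _ _)
        (Multiset.mem_cons_self _ _))
    · exact .inr ⟨D, rfl, rfl⟩

inductive UnfoldStep : Env → Env → Prop
  | mk (Δ : Env) (s : SName) (p : Role) (S : SessionTy) :
      UnfoldStep (EnvEntry.ep s p (.mu S) ::ₘ Δ) (EnvEntry.ep s p (SessionTy.mu S).unfold ::ₘ Δ)

theorem UnfoldStep.snames_eq {Δ Δ' : Env} (h : UnfoldStep Δ Δ') : snames Δ' = snames Δ := by
  cases h
  simp only [snames_cons, EnvEntry.sname]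

theorem snames_eq_of_unfoldSteps {Δ Δ' : Env} (h : Relation.ReflTransGen UnfoldStep Δ Δ') :
    snames Δ' = snames Δ := by
  induction h with
  | refl => rfl
  | tail _ h ih => rw [h.snames_eq, ih]

theorem EStep.split_of_disjoint {Γ Γ' : Env} (h : EStep Γ Γ') {A B : Env} (hΓ : Γ = A + B)
    (hd : Disjoint (snames A) (snames B)) :
    (∃ A' B', EStep A A' ∧ Relation.ReflTransGen UnfoldStep B B' ∧ Γ' = A' + B') ∨
    (∃ A' B', Relation.ReflTransGen UnfoldStep A A' ∧ EStep B B' ∧ Γ' = A' + B') := by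
  induction h generalizing A B with
  | send Δ s p q ℓ d pay cont Q hℓ =>
    rcases cons_cons_eq_add hΓ rfl hd with ⟨C, rfl, rfl⟩ | ⟨C, rfl, rfl⟩
    · exact .inl ⟨_, B, .send C s p q ℓ d pay cont Q hℓ, .refl, by simp only [Multiset.cons_add]⟩
    · exact .inr ⟨A, _, .refl, .send C s p q ℓ d pay cont Q hℓ, by simp only [Multiset.add_cons]⟩
  | recv Δ s p q ℓ d pay cont Q hℓ =>
    rcases cons_cons_eq_add hΓ rfl hd with ⟨C, rfl, rfl⟩ | ⟨C, rfl, rfl⟩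
    · exact .inl ⟨_, B, .recv C s p q ℓ d pay cont Q hℓ, .refl, by simp only [Multiset.cons_add]⟩
    · exact .inr ⟨A, _, .refl, .recv C s p q ℓ d pay cont Q hℓ, by simp only [Multiset.add_cons]⟩
  | done Δ s p =>
    rcases Multiset.cons_eq_add hΓ with ⟨C, rfl, rfl⟩ | ⟨C, rfl, rfl⟩
    · exact .inl ⟨C, B, .done C s p, .refl, rfl⟩
    · exact .inr ⟨A, C, .refl, .done C s p, rfl⟩
  | unfold Δ Δ' s p S _ ih =>
    rcases Multiset.cons_eq_add hΓ with ⟨C, rfl, rfl⟩ | ⟨C, rfl, rfl⟩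
    · have hu := UnfoldStep.mk C s p S
      rcases ih (Multiset.cons_add _ _ _).symm (hu.snames_eq ▸ hd) with
        ⟨A', B', hA, hB, rfl⟩ | ⟨A', B', hA, hB, rfl⟩
      · exact .inl ⟨A', B', .unfold C A' s p S hA, hB, rfl⟩
      · exact .inr ⟨A', B', .head hu hA, hB, rfl⟩
    · have hu := UnfoldStep.mk C s p S
      rcases ih (Multiset.add_cons _ _ _).symm (hu.snames_eq ▸ hd) with
        ⟨A', B', hA, hB, rfl⟩ | ⟨A', B', hA, hB, rfl⟩
      · exact .inl ⟨A', B', hA, .head hu hB, rfl⟩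
      · exact .inr ⟨A', B', hA, .unfold C B' s p S hB, rfl⟩

theorem ERed.of_envCong {Δ Δ' Δ'' : Env} (hc : EnvCong Δ Δ') (h : ERed Δ' Δ'') : ERed Δ Δ'' :=
  let ⟨Γ, Γ', c, st, c'⟩ := h
  ⟨Γ, Γ', hc.trans c, st, c'⟩

theorem HeadSafe.of_envCong {Δ Δ' : Env} (hc : EnvCong Δ Δ') (hs : HeadSafe Δ') :
    HeadSafe Δ := by
  intro s p q d pay cont Q hep hqu ℓ B Q' hQ
  obtain ⟨_, hep', ⟨⟩⟩ := Multiset.exists_mem_of_rel_of_mem hc hep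
  obtain ⟨_, hqu', hcqu⟩ := Multiset.exists_mem_of_rel_of_mem hc hqu
  cases hcqu with | qu hQQ' =>
  exact hs s p q d pay cont _ hep' hqu' ℓ B Q' (.trans _ _ _ (.symm _ _ hQQ') hQ)

theorem HeadSafe.add {A B : Env} (hd : Disjoint (snames A) (snames B)) (hA : HeadSafe A)
    (hB : HeadSafe B) : HeadSafe (A + B) := by
  intro s p q d pay cont Q hep hqu
  rcases Multiset.mem_add.1 hep with hep | hep <;> rcases Multiset.mem_add.1 hqu with hqu | hqu
  · exact hA s p q d pay cont Q hep hqu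
  · exact (sname_ne_of_disjoint hd hep hqu rfl).elim
  · exact (sname_ne_of_disjoint hd hqu hep rfl).elim
  · exact hB s p q d pay cont Q hep hqu

namespace EnvSafe

variable {Δ Δ' : Env}

theorem headSafe (hs : EnvSafe Δ) : HeadSafe Δ :=
  let ⟨_, hφ, hΔ⟩ := hs
  (hφ Δ hΔ).1

theorem unfoldStep (hs : EnvSafe Δ) (h : UnfoldStep Δ Δ') : EnvSafe Δ' := by
  obtain ⟨φ, hφ, hΔ⟩ := hs
  cases h with
  | mk C s p S => exact ⟨φ, hφ, (hφ _ hΔ).2.1 C s p S rfl⟩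

theorem unfoldSteps (hs : EnvSafe Δ) (h : Relation.ReflTransGen UnfoldStep Δ Δ') :
    EnvSafe Δ' := by
  induction h with
  | refl => exact hs
  | tail _ h ih => exact ih.unfoldStep h

theorem eRed (hs : EnvSafe Δ) (h : ERed Δ Δ') : EnvSafe Δ' :=
  let ⟨φ, hφ, hΔ⟩ := hs
  ⟨φ, hφ, (hφ Δ hΔ).2.2 Δ' h⟩

theorem envCong (hs : EnvSafe Δ) (hc : EnvCong Δ Δ') : EnvSafe Δ' := by
  refine ⟨fun Γ => ∃ Γ₀, EnvCong Γ Γ₀ ∧ EnvSafe Γ₀, ?_, Δ, hc.symm, hs⟩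
  rintro Γ ⟨Γ₀, hΓ, hΓ₀⟩
  refine ⟨hΓ₀.headSafe.of_envCong hΓ, ?_,
    fun Γ' h => ⟨Γ', .refl Γ', hΓ₀.eRed (h.of_envCong hΓ.symm)⟩⟩
  rintro Γ' s p S rfl
  obtain ⟨_, Γ₁, ⟨⟩, hΓ₁, rfl⟩ := Multiset.rel_cons_left.1 hΓ
  exact ⟨_, .cons .ep hΓ₁, hΓ₀.unfoldStep (.mk Γ₁ s p S)⟩

end EnvSafe

def SafeDisjointSum (Γ : Env) : Prop :=
  ∃ A B, Γ = A + B ∧ Disjoint (snames A) (snames B) ∧ EnvSafe A ∧ EnvSafe B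

namespace SafeDisjointSum

theorem headSafe {Γ : Env} (h : SafeDisjointSum Γ) : HeadSafe Γ := by
  obtain ⟨A, B, rfl, hd, hA, hB⟩ := h
  exact hA.headSafe.add hd hB.headSafe

theorem unfoldStep {Γ Γ' : Env} (h : SafeDisjointSum Γ) (hu : UnfoldStep Γ Γ') :
    SafeDisjointSum Γ' := by
  obtain ⟨Δ, s, p, S⟩ := hu
  obtain ⟨A, B, hΓ, hd, hA, hB⟩ := h
  rcases Multiset.cons_eq_add hΓ with ⟨C, rfl, rfl⟩ | ⟨C, rfl, rfl⟩
  · have hu := UnfoldStep.mk C s p S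
    exact ⟨_, B, (Multiset.cons_add _ _ _).symm, hu.snames_eq ▸ hd, hA.unfoldStep hu, hB⟩
  · have hu := UnfoldStep.mk C s p S
    exact ⟨A, _, (Multiset.add_cons _ _ _).symm, hu.snames_eq ▸ hd, hA, hB.unfoldStep hu⟩

theorem of_step_of_unfoldSteps {A B A₀ B₀ A' B' Γ' : Env} (hd : Disjoint (snames A) (snames B))
    (hA : EnvSafe A) (hB : EnvSafe B) (cA : EnvCong A A₀) (cB : EnvCong B B₀)
    (st : EStep A₀ A') (hu : Relation.ReflTransGen UnfoldStep B₀ B')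
    (c : EnvCong (A' + B') Γ') : SafeDisjointSum Γ' := by
  obtain ⟨A₁, B₁, cA', cB', rfl⟩ := Multiset.rel_add_left.1 c
  have hA₁ : snames A₁ ⊆ snames A := by
    rw [← snames_eq_of_envCong cA', snames_eq_of_envCong cA]
    exact st.snames_subset
  have hB₁ : snames B₁ = snames B := by
    rw [← snames_eq_of_envCong cB', snames_eq_of_unfoldSteps hu, snames_eq_of_envCong cB]
  exact ⟨A₁, B₁, rfl, hd.mono hA₁ hB₁.le, hA.eRed ⟨A₀, A', cA, st, cA'⟩,
    ((hB.envCong cB).unfoldSteps hu).envCong cB'⟩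

theorem eRed {Γ Γ' : Env} (h : SafeDisjointSum Γ) (hr : ERed Γ Γ') : SafeDisjointSum Γ' := by
  obtain ⟨A, B, rfl, hd, hA, hB⟩ := h
  obtain ⟨_, _, c, st, c'⟩ := hr
  obtain ⟨A₀, B₀, cA, cB, rfl⟩ := Multiset.rel_add_left.1 c
  have hd₀ : Disjoint (snames A₀) (snames B₀) := by
    rwa [← snames_eq_of_envCong cA, ← snames_eq_of_envCong cB]
  rcases st.split_of_disjoint rfl hd₀ with ⟨A', B', stA, huB, rfl⟩ | ⟨A', B', huA, stB, rfl⟩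
  · exact of_step_of_unfoldSteps hd hA hB cA cB stA huB c'
  · exact of_step_of_unfoldSteps hd.symm hB hA cB cA stB huA (add_comm A' B' ▸ c')

theorem isSafetyProp : IsSafetyProp SafeDisjointSum := fun _ h =>
  ⟨h.headSafe, fun Δ' s p S hΓ => h.unfoldStep (hΓ ▸ .mk Δ' s p S), fun _ => h.eRed⟩

end SafeDisjointSum

/-- if `Δ₁` and `Δ₂` have disjoint session names and each is
safe, then the combined environment `Δ₁ + Δ₂` is safe. -/
theorem safe_add_of_safe (Δ₁ Δ₂ : Env)
    (hdisj : Disjoint (snames Δ₁) (snames Δ₂))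
    (h₁ : EnvSafe Δ₁) (h₂ : EnvSafe Δ₂) : EnvSafe (Δ₁ + Δ₂) :=
  ⟨SafeDisjointSum, SafeDisjointSum.isSafetyProp, Δ₁, Δ₂, rfl, hdisj, h₁, h₂⟩
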